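/- arXiv:0902.2311 — 8 statements merged into one kernel-verified Lean document; each statement's English description precedes it below -/
import Mathlib

section
/- Let p>2, N≥1, ε=±1, K>0, and p' = p/(p-1). Then w(r) = K(N(Kp')^{p-2} + ε r^{p'}) solves equation (E_w) with α = -p' on (0,∞) (when ε=-1, on the interval where the formula is differentiable, interpreting |w'|^{p-2}w' appropriately). -/
/-!
With `q = p'` the conjugate exponent, `(q - 1)(p - 1) = 1`, so for `w = K (A + ε r^q)` the flux
`|w'|^{p-2} w'` is *linear* in `r`: it equals `|c|^{p-2} c r` with `c = K ε q`. The first two terms of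
`(E_w)` then add up to `N |c|^{p-2} c = N ε (K q)^{p-1}` (as `|ε| = 1`), which is exactly what
`ε α w` contributes with `α = -q` and `A = N (K q)^{p-2}`; the two `r^q` terms cancel.
-/

/-- Equation (E_w): (|w'|^{p-2}w')' + ((N-1)/r)|w'|^{p-2}w' + ε(r w' + α w) = 0. -/
def Ew (p N ε α : ℝ) (w : ℝ → ℝ) (r : ℝ) : Prop :=
  deriv (fun s => |deriv w s| ^ (p - 2) * deriv w s) r
    + ((N - 1) / r) * (|deriv w r| ^ (p - 2) * deriv w r)
    + ε * (r * deriv w r + α * w r) = 0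

lemma deriv_const_mul_const_add_mul_rpow (K A ε q : ℝ) {s : ℝ} (hs : 0 < s) :
    deriv (fun x => K * (A + ε * x ^ q)) s = K * ε * q * s ^ (q - 1) := by
  have h := (((Real.hasDerivAt_rpow_const (p := q) (Or.inl hs.ne')).const_mul ε).const_add A).const_mul K
  rw [h.deriv]
  ring

lemma abs_mul_rpow_rpow_mul_self_of_conj {p q : ℝ} (hpq : (q - 1) * (p - 1) = 1) (c : ℝ) {s : ℝ}
    (hs : 0 < s) :
    |c * s ^ (q - 1)| ^ (p - 2) * (c * s ^ (q - 1)) = |c| ^ (p - 2) * c * s := by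
  have hpow : (s ^ (q - 1)) ^ (p - 2) * s ^ (q - 1) = s := by
    rw [← Real.rpow_mul hs.le, ← Real.rpow_add hs,
      show (q - 1) * (p - 2) + (q - 1) = (q - 1) * (p - 1) by ring, hpq, Real.rpow_one]
  rw [abs_mul, abs_of_pos (Real.rpow_pos_of_pos hs _),
    Real.mul_rpow (abs_nonneg c) (Real.rpow_nonneg hs.le _)]
  linear_combination |c| ^ (p - 2) * c * hpow

lemma deriv_flux_of_conj {p q c r : ℝ} {w : ℝ → ℝ} (hpq : (q - 1) * (p - 1) = 1) (hr : 0 < r)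
    (hw : ∀ s > 0, deriv w s = c * s ^ (q - 1)) :
    deriv (fun s => |deriv w s| ^ (p - 2) * deriv w s) r = |c| ^ (p - 2) * c := by
  have hlin : (fun s => |deriv w s| ^ (p - 2) * deriv w s) =ᶠ[nhds r]
      fun s => |c| ^ (p - 2) * c * s :=
    Filter.eventuallyEq_of_mem (Ioi_mem_nhds hr) fun s hs => by
      rw [hw s hs, abs_mul_rpow_rpow_mul_self_of_conj hpq c hs]
  rw [hlin.deriv_eq, ((hasDerivAt_id' r).const_mul _).deriv, mul_one]

theorem stmt6_general (p N ε K p' : ℝ) (hp : 2 < p)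
    (hε : ε = 1 ∨ ε = -1) (hK : 0 < K) (hp' : p' = p / (p - 1)) :
    ∀ r ∈ Set.Ioi (0 : ℝ),
      Ew p N ε (-p') (fun s => K * (N * (K * p') ^ (p - 2) + ε * s ^ p')) r := by
  intro r (hr : 0 < r)
  have hp'pos : 0 < p' := by rw [hp']; exact div_pos (by linarith) (by linarith)
  have hconj : (p' - 1) * (p - 1) = 1 := by
    rw [hp', div_sub_one (by linarith), div_mul_cancel₀ _ (by linarith)]
    ring
  have hw : ∀ s > 0, deriv (fun x => K * (N * (K * p') ^ (p - 2) + ε * x ^ p')) s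
      = K * ε * p' * s ^ (p' - 1) := fun s hs => deriv_const_mul_const_add_mul_rpow _ _ _ _ hs
  have habs : |K * ε * p'| = K * p' := by
    rcases hε with rfl | rfl <;> simp [abs_of_pos hK, abs_of_pos hp'pos]
  unfold Ew
  rw [deriv_flux_of_conj hconj hr hw, hw r hr, abs_mul_rpow_rpow_mul_self_of_conj hconj _ hr, habs,
    Real.rpow_sub_one hr.ne']
  field_simp [hr.ne']
  ring

/-- For K>0, w(r) = K(N(Kp')^{p-2} + ε r^{p'}) solves equation (E_w) with α = -p'
on (0,∞). -/
theorem stmt6 (p N ε K p' : ℝ) (hp : 2 < p) (hN : 1 ≤ N)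
    (hε : ε = 1 ∨ ε = -1) (hK : 0 < K) (hp' : p' = p / (p - 1)) :
    ∀ r ∈ Set.Ioi (0 : ℝ),
      Ew p N ε (-p') (fun s => K * (N * (K * p') ^ (p - 2) + ε * s ^ p')) r :=
  stmt6_general p N ε K p' hp hε hK hp'
end

section
/- Let p>2, N=1, ε=±1, K∈ℝ with K≠0, and α = -(p-1)/(p-2). Then w(r) = (K r + ε |α|^{p-1} |K|^p)_+^{(p-1)/(p-2)} solves equation (E_w) on every interval where K r + ε |α|^{p-1}|K|^p > 0. -/
/-!
With `q = (p - 1)/(p - 2)` we have `(q - 1)(p - 2) = 1`, so for `u = K r + c > 0` the flux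
`|w'|^{p-2} w'` of `w = u^q` is the constant multiple `q^{p-1} |K|^{p-2} K u^q` of `w`. All three
terms of `(E_w)` are then multiples of `u^{q-1}`, and the choice `c = ε q^{p-1} |K|^p` (with
`ε² = 1`) makes them cancel. Near a point where `u > 0` the positive part is inactive.
-/

open Filter Topology

theorem Ew_congr {p N ε α : ℝ} {w v : ℝ → ℝ} {r : ℝ} (h : w =ᶠ[𝓝 r] v) :
    Ew p N ε α w r ↔ Ew p N ε α v r := by
  have hd := h.deriv
  have hflux : (fun s => |deriv w s| ^ (p - 2) * deriv w s) =ᶠ[𝓝 r]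
      fun s => |deriv v s| ^ (p - 2) * deriv v s :=
    hd.fun_comp fun x => |x| ^ (p - 2) * x
  unfold Ew
  rw [hflux.deriv_eq, hd.eq_of_nhds, h.eq_of_nhds]

theorem eventually_affine_pos {K c r : ℝ} (hr : 0 < K * r + c) : ∀ᶠ s in 𝓝 r, 0 < K * s + c :=
  (isOpen_lt continuous_const (by fun_prop)).mem_nhds hr

theorem hasDerivAt_affine_rpow {K c q s : ℝ} (hs : 0 < K * s + c) :
    HasDerivAt (fun u => (K * u + c) ^ q) (q * (K * s + c) ^ (q - 1) * K) s := by
  have h := (((hasDerivAt_id s).const_mul K).add_const c).rpow_const (p := q) (Or.inl hs.ne')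
  exact h.congr_deriv (by simp only [id]; ring)

theorem deriv_affine_rpow_eventuallyEq {K c q r : ℝ} (hr : 0 < K * r + c) :
    deriv (fun u => (K * u + c) ^ q) =ᶠ[𝓝 r] fun s => q * (K * s + c) ^ (q - 1) * K := by
  filter_upwards [eventually_affine_pos hr] with s hs
  exact (hasDerivAt_affine_rpow hs).deriv

theorem abs_rpow_mul_self_deriv_rpow {p q t : ℝ} (K : ℝ) (hq : 0 < q)
    (hpq : (q - 1) * (p - 2) = 1) (ht : 0 < t) :
    |q * t ^ (q - 1) * K| ^ (p - 2) * (q * t ^ (q - 1) * K)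
      = q ^ (p - 1) * |K| ^ (p - 2) * K * t ^ q := by
  have htq : 0 < t ^ (q - 1) := Real.rpow_pos_of_pos ht _
  have hpow : (t ^ (q - 1)) ^ (p - 2) = t := by
    rw [← Real.rpow_mul ht.le, hpq, Real.rpow_one]
  have hqq : q ^ (p - 1) = q * q ^ (p - 2) := by
    have h := Real.rpow_sub_one hq.ne' (p - 1)
    rw [show p - 1 - 1 = p - 2 by ring] at h
    rw [h, mul_div_cancel₀ _ hq.ne']
  have htt : t ^ q = t * t ^ (q - 1) := by
    rw [Real.rpow_sub_one ht.ne']; field_simp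
  rw [abs_mul, abs_mul, abs_of_pos hq, abs_of_pos htq, Real.mul_rpow (by positivity) (abs_nonneg K),
    Real.mul_rpow hq.le htq.le, hpow, hqq, htt]
  ring

theorem Ew_one_affine_rpow {p q ε K r : ℝ} (hp : 0 < p) (hq : 0 < q) (hpq : (q - 1) * (p - 2) = 1)
    (hε : ε * ε = 1) (hr : 0 < K * r + ε * q ^ (p - 1) * |K| ^ p) :
    Ew p 1 ε (-q) (fun s => (K * s + ε * q ^ (p - 1) * |K| ^ p) ^ q) r := by
  set c := ε * q ^ (p - 1) * |K| ^ p with hc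
  have hd := deriv_affine_rpow_eventuallyEq (q := q) hr
  have hflux : (fun s => |deriv (fun u => (K * u + c) ^ q) s| ^ (p - 2)
        * deriv (fun u => (K * u + c) ^ q) s)
      =ᶠ[𝓝 r] fun s => q ^ (p - 1) * |K| ^ (p - 2) * K * (K * s + c) ^ q := by
    filter_upwards [hd, eventually_affine_pos hr] with s hds hs
    rw [hds, abs_rpow_mul_self_deriv_rpow K hq hpq hs]
  have hKp : |K| ^ p = K * K * |K| ^ (p - 2) := by
    have h := Real.rpow_add' (abs_nonneg K) (y := 2) (z := p - 2) (by linarith)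
    rwa [add_sub_cancel, Real.rpow_two, sq_abs, sq] at h
  have hu : (K * r + c) ^ q = (K * r + c) * (K * r + c) ^ (q - 1) := by
    rw [Real.rpow_sub_one hr.ne']; field_simp
  unfold Ew
  dsimp only
  rw [hflux.deriv_eq, ((hasDerivAt_affine_rpow hr).const_mul _).deriv, hd.eq_of_nhds, hu,
    sub_self, zero_div, zero_mul, add_zero, hc]
  linear_combination (-(q * q ^ (p - 1) * (K * r + c) ^ (q - 1))) * (hKp + |K| ^ p * hε)

theorem stmt7_general (p ε K α : ℝ) (hp : 2 < p) (hε : ε = 1 ∨ ε = -1)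
    (hα : α = -((p - 1) / (p - 2))) :
    ∀ r : ℝ, 0 < r → 0 < K * r + ε * |α| ^ (p - 1) * |K| ^ p →
      Ew p 1 ε α
        (fun s => (max (K * s + ε * |α| ^ (p - 1) * |K| ^ p) 0) ^ ((p - 1) / (p - 2))) r := by
  intro r _ hpos
  set q := (p - 1) / (p - 2)
  have hq : 0 < q := div_pos (by linarith) (by linarith)
  have hpq : (q - 1) * (p - 2) = 1 := by
    have hp2 : p - 2 ≠ 0 := by linarith
    simp only [q]; field_simp; ring
  have hε2 : ε * ε = 1 := by rcases hε with rfl | rfl <;> norm_num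
  rw [hα, abs_neg, abs_of_pos hq] at hpos ⊢
  refine (Ew_congr ?_).2 (Ew_one_affine_rpow (by linarith) hq hpq hε2 hpos)
  filter_upwards [eventually_affine_pos hpos] with s hs
  rw [max_eq_left hs.le]

/-- In dimension N=1 with α = -(p-1)/(p-2) and K ≠ 0,
w(r) = (K r + ε|α|^{p-1}|K|^p)_+^{(p-1)/(p-2)} solves equation (E_w)
wherever K r + ε|α|^{p-1}|K|^p > 0. -/
theorem stmt7 (p ε K α : ℝ) (hp : 2 < p) (hε : ε = 1 ∨ ε = -1)
    (hK : K ≠ 0) (hα : α = -((p - 1) / (p - 2))) :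
    ∀ r : ℝ, 0 < r → 0 < K * r + ε * |α| ^ (p - 1) * |K| ^ p →
      Ew p 1 ε α
        (fun s => (max (K * s + ε * |α| ^ (p - 1) * |K| ^ p) 0) ^ ((p - 1) / (p - 2))) r :=
  stmt7_general p ε K α hp hε hα
end

section
/- Let p>2, N≥1, ε=±1, α∈ℝ, and let w be a C^1 solution of equation (E_w) on an interval I⊂(0,∞) with |w'|^{p-2}w' of class C^1. Define J_N(r) = r^N (w(r) + ε r^{-1} |w'(r)|^{p-2} w'(r)). Then J_N'(r) = (N-α) r^{N-1} w(r) on I. -/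
/-! Write `v` for the flux `|w'|^{p-2} w'`, so that (E_w) reads
`v' + (N-1)/r · v + ε (r w' + α w) = 0`. Differentiating `J_N = r^N (w + ε v / r)` by the product
rule and substituting `v'` from the equation, the `v` terms cancel and, because `ε² = 1`, so do
the `w'` terms, leaving `(N - α) r^{N-1} w`. -/

theorem hasDerivAt_rpow_mul_add_inv_mul_of_flux {N ε α r w' v' : ℝ} {w v : ℝ → ℝ}
    (hr : r ≠ 0) (hε : ε * ε = 1) (hw : HasDerivAt w w' r) (hv : HasDerivAt v v' r)
    (hflux : v' + (N - 1) / r * v r + ε * (r * w' + α * w r) = 0) :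
    HasDerivAt (fun s => s ^ N * (w s + ε * s⁻¹ * v s)) ((N - α) * r ^ (N - 1) * w r) r := by
  have hJ := (Real.hasDerivAt_rpow_const (p := N) (Or.inl hr)).mul
    (hw.add (((hasDerivAt_inv hr).const_mul ε).mul hv))
  refine hJ.congr_deriv ?_
  have hrN : r ^ N = r ^ (N - 1) * r := by rw [← Real.rpow_add_one hr, sub_add_cancel]
  have hv' : v' = -((N - 1) / r * v r + ε * (r * w' + α * w r)) := by linarith
  rw [hrN, hv']
  simp only [Pi.add_apply, Pi.mul_apply]
  field_simp
  linear_combination -r ^ (N - 1) * (w r * r * α + r ^ 2 * w') * hε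

theorem stmt8_general (p N ε α : ℝ) (hε : ε = 1 ∨ ε = -1)
    (I : Set ℝ) (hI0 : I ⊆ Set.Ioi 0)
    (w : ℝ → ℝ)
    (hw1 : ∀ r ∈ I, DifferentiableAt ℝ w r)
    (hw2 : ∀ r ∈ I, DifferentiableAt ℝ (fun s => |deriv w s| ^ (p - 2) * deriv w s) r)
    (heq : ∀ r ∈ I, Ew p N ε α w r) :
    ∀ r ∈ I,
      HasDerivAt (fun s => s ^ N * (w s + ε * s⁻¹ * (|deriv w s| ^ (p - 2) * deriv w s)))
        ((N - α) * r ^ (N - 1) * w r) r := by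
  intro r hr
  have hε2 : ε * ε = 1 := by rcases hε with rfl | rfl <;> norm_num
  exact hasDerivAt_rpow_mul_add_inv_mul_of_flux (hI0 hr).ne' hε2 (hw1 r hr).hasDerivAt
    (hw2 r hr).hasDerivAt (heq r hr)

/-- If w solves (E_w) on an open interval I ⊆ (0,∞), then
J_N(r) = r^N(w + ε r⁻¹|w'|^{p-2}w') satisfies J_N'(r) = (N-α) r^{N-1} w(r). -/
theorem stmt8 (p N ε α : ℝ) (hp : 2 < p) (hN : 1 ≤ N) (hε : ε = 1 ∨ ε = -1)
    (I : Set ℝ) (hI : IsOpen I) (hI0 : I ⊆ Set.Ioi 0)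
    (w : ℝ → ℝ)
    (hw1 : ∀ r ∈ I, DifferentiableAt ℝ w r)
    (hw2 : ∀ r ∈ I, DifferentiableAt ℝ (fun s => |deriv w s| ^ (p - 2) * deriv w s) r)
    (heq : ∀ r ∈ I, Ew p N ε α w r) :
    ∀ r ∈ I,
      HasDerivAt (fun s => s ^ N * (w s + ε * s⁻¹ * (|deriv w s| ^ (p - 2) * deriv w s)))
        ((N - α) * r ^ (N - 1) * w r) r :=
  stmt8_general p N ε α hε I hI0 w hw1 hw2 heq
end

section
/- Let p>2, N≥1, ε=±1, α∈ℝ, and let w solve equation (E_w) on I⊂(0,∞). Define J_α(r) = r^α (w(r) + ε r^{-1}|w'(r)|^{p-2}w'(r)). Then J_α'(r) = -ε(N-α) r^{α-2} |w'(r)|^{p-2} w'(r) on I. -/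
/-!
Write `g = |w'|^{p-2} w'` for the flux. The product rule gives
`J_α' = r^{α-2} (α r w + α ε g + r² w' - ε g + ε r g')`, and (E_w) says
`ε r g' = -ε (N-1) g - ε² (r² w' + α r w)`. Since `ε² = 1`, the terms in `w` and `w'` cancel
and `-ε (N - α) g` remains.
-/

open Real

lemma hasDerivAt_rpow_mul_add_inv_mul {w g : ℝ → ℝ} {w' g' r : ℝ} (α ε : ℝ) (hr : r ≠ 0)
    (hw : HasDerivAt w w' r) (hg : HasDerivAt g g' r) :
    HasDerivAt (fun s => s ^ α * (w s + ε * s⁻¹ * g s))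
      (α * r ^ (α - 1) * (w r + ε * r⁻¹ * g r)
        + r ^ α * (w' + (ε * -(r ^ 2)⁻¹ * g r + ε * r⁻¹ * g'))) r :=
  (hasDerivAt_rpow_const (Or.inl hr)).mul (hw.add (((hasDerivAt_inv hr).const_mul ε).mul hg))

lemma Ew.deriv_flux_eq {p N ε α r : ℝ} {w : ℝ → ℝ} (h : Ew p N ε α w r) :
    deriv (fun s => |deriv w s| ^ (p - 2) * deriv w s) r
      = -((N - 1) / r * (|deriv w r| ^ (p - 2) * deriv w r)
          + ε * (r * deriv w r + α * w r)) := by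
  unfold Ew at h
  linarith

lemma rpow_deriv_combination_eq {N ε α r w w' g g' : ℝ} (hε : ε * ε = 1) (hr : 0 < r)
    (hg' : g' = -((N - 1) / r * g + ε * (r * w' + α * w))) :
    α * r ^ (α - 1) * (w + ε * r⁻¹ * g) + r ^ α * (w' + (ε * -(r ^ 2)⁻¹ * g + ε * r⁻¹ * g'))
      = -ε * (N - α) * r ^ (α - 2) * g := by
  rw [rpow_sub hr, rpow_sub hr, rpow_one, rpow_two, hg']
  field_simp
  linear_combination (-(r ^ 2 * w' + α * r * w)) * hε

theorem stmt9_general (p N ε α : ℝ) (hε : ε = 1 ∨ ε = -1)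
    (I : Set ℝ) (hI0 : I ⊆ Set.Ioi 0)
    (w : ℝ → ℝ)
    (hw1 : ∀ r ∈ I, DifferentiableAt ℝ w r)
    (hw2 : ∀ r ∈ I, DifferentiableAt ℝ (fun s => |deriv w s| ^ (p - 2) * deriv w s) r)
    (heq : ∀ r ∈ I, Ew p N ε α w r) :
    ∀ r ∈ I,
      HasDerivAt (fun s => s ^ α * (w s + ε * s⁻¹ * (|deriv w s| ^ (p - 2) * deriv w s)))
        (-ε * (N - α) * r ^ (α - 2) * (|deriv w r| ^ (p - 2) * deriv w r)) r := by
  intro r hr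
  have hr0 : 0 < r := hI0 hr
  have hε2 : ε * ε = 1 := by rcases hε with rfl | rfl <;> norm_num
  rw [← rpow_deriv_combination_eq hε2 hr0 (heq r hr).deriv_flux_eq]
  exact hasDerivAt_rpow_mul_add_inv_mul α ε hr0.ne' (hw1 r hr).hasDerivAt (hw2 r hr).hasDerivAt

/-- If w solves (E_w) on an open interval I ⊆ (0,∞), then
J_α(r) = r^α(w + ε r⁻¹|w'|^{p-2}w') satisfies
J_α'(r) = -ε(N-α) r^{α-2} |w'|^{p-2} w'. -/
theorem stmt9 (p N ε α : ℝ) (hp : 2 < p) (hN : 1 ≤ N) (hε : ε = 1 ∨ ε = -1)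
    (I : Set ℝ) (hI : IsOpen I) (hI0 : I ⊆ Set.Ioi 0)
    (w : ℝ → ℝ)
    (hw1 : ∀ r ∈ I, DifferentiableAt ℝ w r)
    (hw2 : ∀ r ∈ I, DifferentiableAt ℝ (fun s => |deriv w s| ^ (p - 2) * deriv w s) r)
    (heq : ∀ r ∈ I, Ew p N ε α w r) :
    ∀ r ∈ I,
      HasDerivAt (fun s => s ^ α * (w s + ε * s⁻¹ * (|deriv w s| ^ (p - 2) * deriv w s)))
        (-ε * (N - α) * r ^ (α - 2) * (|deriv w r| ^ (p - 2) * deriv w r)) r :=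
  stmt9_general p N ε α hε I hI0 w hw1 hw2 heq
end

section
/- Let p>2, N≥1, ε=1, α≤N with α≠0, and let w be a nontrivial solution of equation (E_w) on an interval I⊂(0,∞). Then w has at most one simple zero in I. More precisely: if ρ₀ < ρ₁ are two consecutive zeros of w with w>0 on (ρ₀,ρ₁) and ρ₀ simple (w'(ρ₀)>0), then one reaches a contradiction with the identity J_N(ρ₁)-J_N(ρ₀) = (N-α)∫_{ρ₀}^{ρ₁} s^{N-1} w ds. -/
/-!
Along a solution of (E_w), the flux `J(r) = r^{N-1} (ε r w + |w'|^{p-2} w')` satisfies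
`J' = ε (N - α) r^{N-1} w`. On an arch `(ρ₀, ρ₁)` where `w > 0` and `α ≤ N`, `J` is therefore
nondecreasing. At the zeros, `J` reduces to `r^{N-1} |w'|^{p-2} w'`, which is positive at the simple
zero `ρ₀` and nonpositive at `ρ₁`, where `w` arrives at `0` from above.
-/

open Set Filter Topology

/-- The paper's `J_N` for `ε = 1`. -/
noncomputable def radialFlux (p N ε : ℝ) (w : ℝ → ℝ) (r : ℝ) : ℝ :=
  r ^ N * (ε * w r) + r ^ (N - 1) * (|deriv w r| ^ (p - 2) * deriv w r)

theorem hasDerivAt_radialFlux {p N ε α r : ℝ} {w : ℝ → ℝ} (hr : 0 < r)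
    (hw : DifferentiableAt ℝ w r)
    (hφ : DifferentiableAt ℝ (fun s => |deriv w s| ^ (p - 2) * deriv w s) r)
    (heq : Ew p N ε α w r) :
    HasDerivAt (radialFlux p N ε w) (ε * (N - α) * (r ^ (N - 1) * w r)) r := by
  set φ : ℝ → ℝ := fun s => |deriv w s| ^ (p - 2) * deriv w s
  have hD := ((Real.hasDerivAt_rpow_const (p := N) (Or.inl hr.ne')).mul
      (hw.hasDerivAt.const_mul ε)).add
    ((Real.hasDerivAt_rpow_const (p := N - 1) (Or.inl hr.ne')).mul hφ.hasDerivAt)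
  have hφ' : deriv φ r = -((N - 1) / r) * φ r - ε * (r * deriv w r + α * w r) := by
    unfold Ew at heq; linarith
  have hpow_pred : r ^ (N - 1 - 1) = r ^ (N - 1) / r := by
    rw [Real.rpow_sub hr, Real.rpow_one]
  have hpow : r ^ N = r ^ (N - 1) * r := by
    rw [← Real.rpow_add_one hr.ne', sub_add_cancel]
  refine hD.congr_deriv ?_
  rw [hφ', hpow_pred, hpow]
  field_simp
  ring

theorem deriv_nonpos_of_nonneg_on_Ioo_of_eq_zero {w : ℝ → ℝ} {a b : ℝ} (hab : a < b)
    (hnonneg : ∀ x ∈ Ioo a b, 0 ≤ w x) (hb : w b = 0) (hw : DifferentiableAt ℝ w b) :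
    deriv w b ≤ 0 := by
  have hslope : Tendsto (slope w b) (𝓝[<] b) (𝓝 (deriv w b)) :=
    (hasDerivAt_iff_tendsto_slope.1 hw.hasDerivAt).mono_left
      (nhdsWithin_mono _ fun x hx => ne_of_lt hx)
  refine le_of_tendsto hslope ?_
  filter_upwards [Ioo_mem_nhdsLT hab] with x hx
  rw [slope_def_field, hb]
  exact div_nonpos_of_nonneg_of_nonpos (by linarith [hnonneg x hx]) (by linarith [hx.2])

theorem monotoneOn_radialFlux {p N ε α a b : ℝ} {w : ℝ → ℝ} (hε : 0 ≤ ε) (hα : α ≤ N)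
    (hr : ∀ r ∈ Icc a b, 0 < r)
    (hw : ∀ r ∈ Icc a b, DifferentiableAt ℝ w r)
    (hφ : ∀ r ∈ Icc a b,
      DifferentiableAt ℝ (fun s => |deriv w s| ^ (p - 2) * deriv w s) r)
    (heq : ∀ r ∈ Icc a b, Ew p N ε α w r) (hnonneg : ∀ r ∈ Ioo a b, 0 ≤ w r) :
    MonotoneOn (radialFlux p N ε w) (Icc a b) := by
  have hJ : ∀ r ∈ Icc a b,
      HasDerivAt (radialFlux p N ε w) (ε * (N - α) * (r ^ (N - 1) * w r)) r :=
    fun r h => hasDerivAt_radialFlux (hr r h) (hw r h) (hφ r h) (heq r h)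
  refine monotoneOn_of_hasDerivWithinAt_nonneg
    (f' := fun r => ε * (N - α) * (r ^ (N - 1) * w r)) (convex_Icc a b)
    (fun r h => (hJ r h).continuousAt.continuousWithinAt) ?_ ?_
  · rw [interior_Icc]
    exact fun r h => (hJ r (Ioo_subset_Icc_self h)).hasDerivWithinAt
  · rw [interior_Icc]
    intro r h
    have := Real.rpow_pos_of_pos (hr r (Ioo_subset_Icc_self h)) (N - 1)
    have := hnonneg r h
    have : 0 ≤ N - α := by linarith
    positivity

theorem stmt14_general (p N α : ℝ)
    (hα : α ≤ N)
    (I : Set ℝ) (hconn : I.OrdConnected) (hI0 : I ⊆ Set.Ioi 0)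
    (w : ℝ → ℝ)
    (hw1 : ∀ r ∈ I, DifferentiableAt ℝ w r)
    (hw2 : ∀ r ∈ I, DifferentiableAt ℝ (fun s => |deriv w s| ^ (p - 2) * deriv w s) r)
    (heq : ∀ r ∈ I, Ew p N 1 α w r) :
    ¬ ∃ ρ₀ ρ₁ : ℝ, ρ₀ ∈ I ∧ ρ₁ ∈ I ∧ ρ₀ < ρ₁ ∧ w ρ₀ = 0 ∧ w ρ₁ = 0 ∧
      (∀ r ∈ Set.Ioo ρ₀ ρ₁, 0 < w r) ∧ 0 < deriv w ρ₀ := by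
  rintro ⟨ρ₀, ρ₁, h₀I, h₁I, hlt, hw₀, hw₁, hpos, hd₀⟩
  have hIcc : Icc ρ₀ ρ₁ ⊆ I := hconn.out h₀I h₁I
  have hnonneg : ∀ r ∈ Ioo ρ₀ ρ₁, 0 ≤ w r := fun r h => (hpos r h).le
  have hmono := monotoneOn_radialFlux zero_le_one hα (fun r h => hI0 (hIcc h))
    (fun r h => hw1 r (hIcc h)) (fun r h => hw2 r (hIcc h)) (fun r h => heq r (hIcc h)) hnonneg
    (left_mem_Icc.2 hlt.le) (right_mem_Icc.2 hlt.le) hlt.le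
  have hd₁ := deriv_nonpos_of_nonneg_on_Ioo_of_eq_zero hlt hnonneg hw₁ (hw1 ρ₁ h₁I)
  have hJ₀ : 0 < radialFlux p N 1 w ρ₀ := by
    have := Real.rpow_pos_of_pos (hI0 h₀I) (N - 1)
    have := Real.rpow_pos_of_pos (abs_pos.2 hd₀.ne') (p - 2)
    simp only [radialFlux, hw₀, mul_zero, zero_add]
    positivity
  have hJ₁ : radialFlux p N 1 w ρ₁ ≤ 0 := by
    simp only [radialFlux, hw₁, mul_zero, zero_add]
    exact mul_nonpos_of_nonneg_of_nonpos (Real.rpow_nonneg (hI0 h₁I).le _)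
      (mul_nonpos_of_nonneg_of_nonpos (Real.rpow_nonneg (abs_nonneg _) _) hd₁)
  linarith

/-- For ε=1 and α ≤ N, α ≠ 0, a nontrivial solution of (E_w) has at most one
simple zero: there cannot be two consecutive zeros ρ₀ < ρ₁ with w > 0 in between
and ρ₀ simple (w'(ρ₀) > 0). -/
theorem stmt14 (p N α : ℝ) (hp : 2 < p) (hN : 1 ≤ N)
    (hα : α ≤ N) (hα0 : α ≠ 0)
    (I : Set ℝ) (hI : IsOpen I) (hconn : I.OrdConnected) (hI0 : I ⊆ Set.Ioi 0)
    (w : ℝ → ℝ) (hne : ∃ r ∈ I, w r ≠ 0)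
    (hw1 : ∀ r ∈ I, DifferentiableAt ℝ w r)
    (hw2 : ∀ r ∈ I, DifferentiableAt ℝ (fun s => |deriv w s| ^ (p - 2) * deriv w s) r)
    (heq : ∀ r ∈ I, Ew p N 1 α w r) :
    ¬ ∃ ρ₀ ρ₁ : ℝ, ρ₀ ∈ I ∧ ρ₁ ∈ I ∧ ρ₀ < ρ₁ ∧ w ρ₀ = 0 ∧ w ρ₁ = 0 ∧
      (∀ r ∈ Set.Ioo ρ₀ ρ₁, 0 < w r) ∧ 0 < deriv w ρ₀ :=
  stmt14_general p N α hα I hconn hI0 w hw1 hw2 heq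
end

section
/- Let p>2, N≥1, ε=1, α>N, and let w be a regular solution of equation (E_w) on [0,∞) with w(0)=a>0 and w'(0)=0. Then w has at least one zero; moreover at a first zero ρ₁, w'(ρ₁)≠0. (Key step: if w>0 on (0,∞) then J_N<0 everywhere, hence w^{-1/(p-1)}w' + r^{1/(p-1)} < 0, so r ↦ r^{p'} + γ w^{(p-2)/(p-1)} is nonincreasing, a contradiction for large r.) -/
open Filter Topology Set

lemma pos_of_forall_ne_zero {w : ℝ → ℝ} (hw : ContinuousOn w (Ici 0)) (h0 : 0 < w 0)
    (hne : ∀ r, 0 < r → w r ≠ 0) {r : ℝ} (hr : 0 < r) : 0 < w r := by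
  by_contra! hr'
  obtain ⟨c, hc, hwc⟩ :=
    isPreconnected_Ici.intermediate_value (mem_Ici.2 hr.le) self_mem_Ici hw ⟨hr', h0.le⟩
  exact hne c (lt_of_le_of_ne hc fun h => by rw [← h] at hwc; linarith) hwc

lemma neg_of_strictAntiOn_Ioc_of_tendsto_nhdsGT_zero {f : ℝ → ℝ} {b : ℝ} (hb : 0 < b)
    (hf : StrictAntiOn f (Ioc 0 b)) (hf0 : Tendsto f (𝓝[>] 0) (𝓝 0)) : f b < 0 := by
  have hmid : b / 2 ∈ Ioc 0 b := ⟨half_pos hb, by linarith⟩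
  have hle : f (b / 2) ≤ 0 := by
    refine ge_of_tendsto hf0 ?_
    filter_upwards [Ioo_mem_nhdsGT (half_pos hb)] with r hr
    exact (hf ⟨hr.1, by linarith [hr.2]⟩ hmid hr.2).le
  exact (hf hmid ⟨hb, le_rfl⟩ (by linarith)).trans_le hle

lemma rpow_inv_lt_neg_of_abs_rpow_mul_self_lt_neg {p c y : ℝ} (hp : 1 < p) (hc : 0 < c)
    (h : |y| ^ (p - 2) * y < -c) : c ^ (p - 1)⁻¹ < -y := by
  have hy : y < 0 := by
    by_contra! hy
    linarith [mul_nonneg (Real.rpow_nonneg (abs_nonneg y) (p - 2)) hy]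
  have hflux : |y| ^ (p - 2) * y = -(-y) ^ (p - 1) := by
    rw [abs_of_neg hy, show p - 1 = p - 2 + 1 by ring, Real.rpow_add_one (by linarith)]
    ring
  have hcy : c < (-y) ^ (p - 1) := by linarith
  calc c ^ (p - 1)⁻¹ < ((-y) ^ (p - 1)) ^ (p - 1)⁻¹ :=
        Real.rpow_lt_rpow hc.le hcy (inv_pos.2 (by linarith))
    _ = -y := Real.rpow_rpow_inv (by linarith) (by linarith)

-- `r ↦ r^{1+q}/(1+q) + w^{1-q}/(1-q)` has derivative `w^{-q} ((r w)^q + w') < 0`,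
-- but tends to `∞`.
lemma exists_nonpos_of_rpow_mul_lt_neg_deriv {q : ℝ} (hq0 : 0 < q) (hq1 : q < 1) {w : ℝ → ℝ}
    (hw : ∀ r, 0 < r → DifferentiableAt ℝ w r)
    (h : ∀ r, 0 < r → 0 < w r → (r * w r) ^ q < -deriv w r) :
    ∃ r, 0 < r ∧ w r ≤ 0 := by
  by_contra! hpos
  set g : ℝ → ℝ := fun r => r ^ (1 + q) / (1 + q) + w r ^ (1 - q) / (1 - q)
  have hg : ∀ r, 0 < r → HasDerivAt g (w r ^ (-q) * ((r * w r) ^ q + deriv w r)) r := by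
    intro r hr
    have hwr := hpos r hr
    refine (((Real.hasDerivAt_rpow_const (p := 1 + q) (Or.inl hr.ne')).div_const _).add
      (((hw r hr).hasDerivAt.rpow_const (p := 1 - q) (Or.inl hwr.ne')).div_const _)).congr_deriv ?_
    have hinv : w r ^ (-q) * w r ^ q = 1 := by
      rw [← Real.rpow_add hwr, neg_add_cancel, Real.rpow_zero]
    have hq1' : 1 - q ≠ 0 := by linarith
    have hq0' : 1 + q ≠ 0 := by linarith
    rw [Real.mul_rpow hr.le hwr.le, show 1 + q - 1 = q by ring, show 1 - q - 1 = -q by ring]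
    field_simp
    linear_combination -r ^ q * hinv
  have hanti : AntitoneOn g (Ioi 0) := by
    refine antitoneOn_of_deriv_nonpos (convex_Ioi 0)
      (fun r hr => (hg r hr).continuousAt.continuousWithinAt)
      (fun r hr => (hg r (interior_subset hr)).differentiableAt.differentiableWithinAt)
      fun r hr => ?_
    rw [interior_Ioi] at hr
    rw [(hg r hr).deriv]
    exact mul_nonpos_of_nonneg_of_nonpos (Real.rpow_nonneg (hpos r hr).le _)
      (by linarith [h r hr (hpos r hr)])
  have hlim : Tendsto (fun r : ℝ => r ^ (1 + q) / (1 + q)) atTop atTop :=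
    (tendsto_rpow_atTop (by linarith)).atTop_div_const (by linarith)
  obtain ⟨R, hR1, hR⟩ := ((eventually_ge_atTop 1).and (hlim.eventually_gt_atTop (g 1))).exists
  have hgR : R ^ (1 + q) / (1 + q) ≤ g R :=
    le_add_of_nonneg_right (div_nonneg (Real.rpow_nonneg (hpos R (by linarith)).le _) (by linarith))
  linarith [hanti (mem_Ioi.2 one_pos) (mem_Ioi.2 (by linarith)) hR1]

-- `J_N(r) = r^N (w + r⁻¹|w'|^{p-2}w')`, multiplied out so that no division by `r` occurs.
noncomputable def J_N (p N : ℝ) (w : ℝ → ℝ) (r : ℝ) : ℝ :=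
  r ^ (N - 1) * (|deriv w r| ^ (p - 2) * deriv w r) + r ^ N * w r

lemma J_N_eq_rpow_mul {p N r : ℝ} (w : ℝ → ℝ) (hr : 0 < r) :
    J_N p N w r = r ^ (N - 1) * (|deriv w r| ^ (p - 2) * deriv w r + r * w r) := by
  rw [J_N, show r ^ N = r ^ (N - 1) * r by rw [← Real.rpow_add_one hr.ne', sub_add_cancel]]
  ring

lemma hasDerivAt_J_N {p N α r : ℝ} {w : ℝ → ℝ} (hr : 0 < r) (hw : DifferentiableAt ℝ w r)
    (hflux : DifferentiableAt ℝ (fun s => |deriv w s| ^ (p - 2) * deriv w s) r)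
    (heq : Ew p N 1 α w r) :
    HasDerivAt (J_N p N w) ((N - α) * r ^ (N - 1) * w r) r := by
  refine (((Real.hasDerivAt_rpow_const (p := N - 1) (Or.inl hr.ne')).mul
    hflux.hasDerivAt).add ((Real.hasDerivAt_rpow_const (Or.inl hr.ne')).mul
    hw.hasDerivAt)).congr_deriv ?_
  have hflux' : deriv (fun s => |deriv w s| ^ (p - 2) * deriv w s) r
      = -((N - 1) / r * (|deriv w r| ^ (p - 2) * deriv w r)) - (r * deriv w r + α * w r) := by
    rw [Ew] at heq
    linarith
  have h1 : r ^ (N - 1) = r ^ (N - 1 - 1) * r := by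
    rw [← Real.rpow_add_one hr.ne', sub_add_cancel]
  have h2 : r ^ N = r ^ (N - 1 - 1) * r * r := by
    rw [← h1, ← Real.rpow_add_one hr.ne', sub_add_cancel]
  rw [hflux', h2, h1]
  field_simp
  ring

lemma tendsto_J_N_nhdsGT_zero {p N : ℝ} {w : ℝ → ℝ} (hp : 2 ≤ p) (hN : 1 ≤ N)
    (hw : Tendsto w (𝓝[>] 0) (𝓝 (w 0))) (hd : Tendsto (deriv w) (𝓝[>] 0) (𝓝 0)) :
    Tendsto (J_N p N w) (𝓝[>] 0) (𝓝 0) := by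
  have hpow : ∀ s : ℝ, 0 ≤ s → Tendsto (fun r : ℝ => r ^ s) (𝓝[>] 0) (𝓝 ((0 : ℝ) ^ s)) :=
    fun s hs => (Real.continuousAt_rpow_const 0 s (Or.inr hs)).tendsto.mono_left nhdsWithin_le_nhds
  have hflux : Tendsto (fun r => |deriv w r| ^ (p - 2) * deriv w r) (𝓝[>] 0) (𝓝 0) := by
    have hc : Continuous (fun y : ℝ => |y| ^ (p - 2) * y) :=
      ((continuous_abs.rpow_const fun _ => Or.inr (by linarith)).mul continuous_id)
    simpa [Function.comp_def] using (hc.tendsto 0).comp hd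
  have := ((hpow (N - 1) (by linarith)).mul hflux).add ((hpow N (by linarith)).mul hw)
  rwa [mul_zero, Real.zero_rpow (by linarith), zero_mul, add_zero] at this

lemma J_N_neg_of_pos {p N α b : ℝ} {w : ℝ → ℝ} (hα : N < α) (hb : 0 < b)
    (hw : ∀ r, 0 < r → DifferentiableAt ℝ w r)
    (hflux : ∀ r, 0 < r → DifferentiableAt ℝ (fun s => |deriv w s| ^ (p - 2) * deriv w s) r)
    (heq : ∀ r, 0 < r → Ew p N 1 α w r) (hJ0 : Tendsto (J_N p N w) (𝓝[>] 0) (𝓝 0))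
    (hpos : ∀ r, 0 < r → r < b → 0 < w r) : J_N p N w b < 0 := by
  have hJ' : ∀ r, 0 < r → HasDerivAt (J_N p N w) ((N - α) * r ^ (N - 1) * w r) r :=
    fun r hr => hasDerivAt_J_N hr (hw r hr) (hflux r hr) (heq r hr)
  refine neg_of_strictAntiOn_Ioc_of_tendsto_nhdsGT_zero hb (strictAntiOn_of_deriv_neg
    (convex_Ioc 0 b) (fun r hr => (hJ' r hr.1).continuousAt.continuousWithinAt) fun r hr => ?_) hJ0
  rw [interior_Ioc] at hr
  rw [(hJ' r hr.1).deriv]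
  exact mul_neg_of_neg_of_pos (mul_neg_of_neg_of_pos (by linarith) (Real.rpow_pos_of_pos hr.1 _))
    (hpos r hr.1 hr.2)

/-- For ε=1 and α > N, a regular solution (w(0) = a > 0, w'(0⁺) = 0) of (E_w)
has at least one zero, and at a first zero ρ₁ the derivative does not vanish. -/
theorem stmt15 (p N α a : ℝ) (hp : 2 < p) (hN : 1 ≤ N) (hα : N < α)
    (w : ℝ → ℝ) (ha : 0 < a)
    (hcont : ContinuousOn w (Set.Ici 0)) (hw0 : w 0 = a)
    (hd0 : Filter.Tendsto (deriv w) (nhdsWithin 0 (Set.Ioi 0)) (nhds 0))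
    (hw1 : ∀ r : ℝ, 0 < r → DifferentiableAt ℝ w r)
    (hw2 : ∀ r : ℝ, 0 < r →
      DifferentiableAt ℝ (fun s => |deriv w s| ^ (p - 2) * deriv w s) r)
    (heq : ∀ r : ℝ, 0 < r → Ew p N 1 α w r) :
    (∃ r : ℝ, 0 < r ∧ w r = 0) ∧
    ∀ ρ₁ : ℝ, 0 < ρ₁ → w ρ₁ = 0 → (∀ r ∈ Set.Ico (0:ℝ) ρ₁, 0 < w r) →
      deriv w ρ₁ ≠ 0 := by
  have hJ0 : Tendsto (J_N p N w) (𝓝[>] 0) (𝓝 0) := tendsto_J_N_nhdsGT_zero hp.le hN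
    (((hcont 0 self_mem_Ici).mono Ioi_subset_Ici_self).tendsto) hd0
  refine ⟨?_, fun ρ₁ hρ₁ hwρ₁ hpos hder => ?_⟩
  · by_contra! hne
    have hpos : ∀ r, 0 < r → 0 < w r := fun r => pos_of_forall_ne_zero hcont (hw0 ▸ ha) hne
    have hineq : ∀ r, 0 < r → 0 < w r → (r * w r) ^ (p - 1)⁻¹ < -deriv w r := by
      intro r hr hwr
      have hJ := J_N_neg_of_pos hα hr hw1 hw2 heq hJ0 fun s hs _ => hpos s hs
      rw [J_N_eq_rpow_mul w hr] at hJ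
      exact rpow_inv_lt_neg_of_abs_rpow_mul_self_lt_neg (by linarith) (mul_pos hr hwr)
        (by linarith [neg_of_mul_neg_right hJ (Real.rpow_nonneg hr.le _)])
    obtain ⟨r, hr, hwr⟩ := exists_nonpos_of_rpow_mul_lt_neg_deriv (inv_pos.2 (by linarith))
      ((inv_lt_one₀ (by linarith)).2 (by linarith)) hw1 hineq
    exact (hpos r hr).not_ge hwr
  · have hJ := J_N_neg_of_pos hα hρ₁ hw1 hw2 heq hJ0 fun r hr hrρ₁ => hpos r ⟨hr.le, hrρ₁⟩
    simp [J_N, hder, hwρ₁] at hJ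
end

section
/- Let p>2, N≥1, γ=p/(p-2), p'=p/(p-1), ε=1, and α ≤ α* := -γ + γ(N+γ)/((p-1)(N+2γ)). Suppose (y,Y) is a nonconstant periodic solution of the system y' = -γy - |Y|^{(2-p)/(p-1)}Y, Y' = -(γ+N)Y + αy - |Y|^{(2-p)/(p-1)}Y with period P, lying in the quadrant {y>0, Y<0}, whose orbit is a stable (non-unstable) limit cycle, so that ∮(|Y|^{(2-p)/(p-1)}/(p-1) - 2γ - N)dτ ≤ 0. Then integrating α y' - γ Y' over the period and applying Jensen's and Hölder's inequalities yields γ(γ+N)(∮|Y|^{1/(p-1)}dτ)^{p-2} ≤ α+γ and 1 ≤ ((p-1)(2γ+N)/(γ(γ+N)))(α+γ), contradicting α ≤ α*. Hence no such cycle exists. -/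
/-!
Since `α ≤ α* < 0`, the system is cooperative. With `v = -Y > 0` and `q = 1/(p-1)` it reads
`y' = -γ y + v^q`, `v' = -(γ+N) v - α y - v^q`, and the derivatives `(g, h) = (y', v')` solve the
linear system `g' = -γ g + q v^(q-1) h`, `h' = -α g - (γ + N + q v^(q-1)) h`, whose off-diagonal
coefficients are nonnegative; hence the open positive and negative quadrants are forward
invariant for `(g, h)`. By Rolle, `y'` vanishes at some `τ`. If `v'(τ) ≠ 0`, then `(g, h)` enters
one of these quadrants right after `τ`, so `y` is strictly monotone over a whole period, which is
absurd. If `v'(τ) = 0`, uniqueness for the linear system (Grönwall) gives `y' ≡ 0`, so `y` is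
constant.
-/

open Set Filter Topology

theorem pos_of_hasDerivAt_ge_mul {u u' : ℝ → ℝ} {a b K : ℝ} (hab : a ≤ b)
    (hu : ∀ t ∈ Icc a b, HasDerivAt u (u' t) t) (hK : ∀ t ∈ Icc a b, K * u t ≤ u' t)
    (ha : 0 < u a) : 0 < u b := by
  have hw : ∀ t ∈ Icc a b, HasDerivAt (fun t => Real.exp (-K * t) * u t)
      (Real.exp (-K * t) * (u' t - K * u t)) t := fun t ht => by
    have := ((hasDerivAt_id' t).const_mul (-K)).exp.mul (hu t ht)
    exact this.congr_deriv (by ring)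
  have hmono : MonotoneOn (fun t => Real.exp (-K * t) * u t) (Icc a b) :=
    monotoneOn_of_hasDerivWithinAt_nonneg (convex_Icc a b) (HasDerivAt.continuousOn hw)
      (fun t ht => (hw t (interior_subset ht)).hasDerivWithinAt)
      (fun t ht => mul_nonneg (Real.exp_pos _).le (sub_nonneg.2 (hK t (interior_subset ht))))
  have hb : 0 < Real.exp (-K * b) * u b :=
    (mul_pos (Real.exp_pos _) ha).trans_le
      (hmono (left_mem_Icc.2 hab) (right_mem_Icc.2 hab) hab)
  exact pos_of_mul_pos_right hb (Real.exp_pos _).le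

theorem HasDerivAt.eventually_pos_nhdsGT {f : ℝ → ℝ} {f' x : ℝ} (hf : HasDerivAt f f' x)
    (hx : f x = 0) (hf' : 0 < f') : ∀ᶠ t in 𝓝[>] x, 0 < f t := by
  have hslope : ∀ᶠ t in 𝓝[>] x, 0 < slope f x t :=
    (hf.tendsto_slope.mono_left (nhdsGT_le_nhdsNE x)).eventually (eventually_gt_nhds hf')
  filter_upwards [hslope, self_mem_nhdsWithin] with t ht hxt
  rw [slope_def_field, hx, sub_zero] at ht
  exact (div_pos_iff_of_pos_right (sub_pos.2 hxt)).1 ht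

theorem norm_prod_linear_le (a b c d x y : ℝ) :
    ‖(a * x + b * y, c * x + d * y)‖ ≤ (‖a‖ + ‖b‖ + ‖c‖ + ‖d‖) * ‖(x, y)‖ := by
  simp only [Prod.norm_mk, Real.norm_eq_abs]
  have hx : |x| ≤ max |x| |y| := le_max_left _ _
  have hy : |y| ≤ max |x| |y| := le_max_right _ _
  have hrow : ∀ r s : ℝ, |r * x + s * y| ≤ (|r| + |s|) * max |x| |y| := fun r s =>
    calc |r * x + s * y| ≤ |r| * |x| + |s| * |y| := by
          simpa only [abs_mul] using abs_add_le (r * x) (s * y)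
      _ ≤ (|r| + |s|) * max |x| |y| := by
          nlinarith [mul_le_mul_of_nonneg_left hx (abs_nonneg r),
            mul_le_mul_of_nonneg_left hy (abs_nonneg s)]
  have hm : 0 ≤ max |x| |y| := (abs_nonneg x).trans hx
  refine max_le ((hrow a b).trans ?_) ((hrow c d).trans ?_) <;>
    nlinarith [abs_nonneg a, abs_nonneg b, abs_nonneg c, abs_nonneg d]

section LinearPlanar

variable {G H a b c d : ℝ → ℝ} {s T : ℝ}

theorem linear_planar_eq_zero_on_Icc
    (hG : ∀ t, HasDerivAt G (a t * G t + b t * H t) t)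
    (hH : ∀ t, HasDerivAt H (c t * G t + d t * H t) t)
    (ha : ContinuousOn a (Icc s T)) (hb : ContinuousOn b (Icc s T))
    (hc : ContinuousOn c (Icc s T)) (hd : ContinuousOn d (Icc s T))
    (hGs : G s = 0) (hHs : H s = 0) : ∀ t ∈ Icc s T, G t = 0 ∧ H t = 0 := by
  obtain ⟨K, hK⟩ := isCompact_Icc.bddAbove_image (f := fun t => ‖a t‖ + ‖b t‖ + ‖c t‖ + ‖d t‖)
    (K := Icc s T) (by fun_prop)
  have hGH : ∀ t, HasDerivAt (fun t => (G t, H t))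
      (a t * G t + b t * H t, c t * G t + d t * H t) t := fun t => (hG t).prodMk (hH t)
  intro t ht
  simpa [Prod.ext_iff] using eq_zero_of_abs_deriv_le_mul_abs_self_of_eq_zero_right
    (HasDerivAt.continuousOn fun t _ => hGH t) (fun t _ => (hGH t).hasDerivWithinAt)
    (by simp [hGs, hHs])
    (fun r hr => (norm_prod_linear_le _ _ _ _ _ _).trans
      (mul_le_mul_of_nonneg_right (hK ⟨r, Ico_subset_Icc_self hr, rfl⟩) (norm_nonneg _))) t ht

theorem cooperative_pos_on_Icc
    (hG : ∀ t, HasDerivAt G (a t * G t + b t * H t) t)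
    (hH : ∀ t, HasDerivAt H (c t * G t + d t * H t) t)
    (ha : ContinuousOn a (Icc s T)) (hd : ContinuousOn d (Icc s T))
    (hb : ∀ t ∈ Icc s T, 0 ≤ b t) (hc : ∀ t ∈ Icc s T, 0 ≤ c t)
    (hGs : 0 < G s) (hHs : 0 < H s) :
    ∀ t ∈ Icc s T, 0 < G t ∧ 0 < H t := by
  obtain ⟨A, hA⟩ := isCompact_Icc.bddBelow_image ha
  obtain ⟨D, hD⟩ := isCompact_Icc.bddBelow_image hd
  have cG : Continuous G := continuous_iff_continuousAt.2 fun t => (hG t).continuousAt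
  have cH : Continuous H := continuous_iff_continuousAt.2 fun t => (hH t).continuousAt
  by_contra! hbad
  set S := Icc s T ∩ {t | G t ≤ 0 ∨ H t ≤ 0}
  have hS : IsCompact S := isCompact_Icc.inter_right
    ((isClosed_le cG continuous_const).union (isClosed_le cH continuous_const))
  obtain ⟨σ, ⟨hσ, hσbad⟩, hσmin⟩ := hS.exists_isLeast (by
    obtain ⟨t, ht, hGt⟩ := hbad
    exact ⟨t, ht, (le_or_gt (G t) 0).imp_right hGt⟩)
  have hbefore : ∀ r ∈ Ico s σ, 0 < G r ∧ 0 < H r := fun r hr => by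
    by_contra! h
    exact hr.2.not_ge (hσmin ⟨⟨hr.1, hr.2.le.trans hσ.2⟩, (le_or_gt (G r) 0).imp_right h⟩)
  have hsσ : s < σ := hσ.1.lt_of_ne (by rintro rfl; rcases hσbad with h | h <;> linarith)
  have hnonneg : Icc s σ ⊆ {r | 0 ≤ G r ∧ 0 ≤ H r} := by
    rw [← closure_Ico hsσ.ne]
    exact closure_minimal (fun r hr => ⟨(hbefore r hr).1.le, (hbefore r hr).2.le⟩)
      ((isClosed_le continuous_const cG).inter (isClosed_le continuous_const cH))
  have hsub : Icc s σ ⊆ Icc s T := Icc_subset_Icc_right hσ.2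
  have hGσ : 0 < G σ := pos_of_hasDerivAt_ge_mul (K := A) hσ.1 (fun t _ => hG t)
    (fun t ht => by
      have := hnonneg ht
      nlinarith [mul_le_mul_of_nonneg_right (hA ⟨t, hsub ht, rfl⟩) this.1,
        mul_nonneg (hb t (hsub ht)) this.2]) hGs
  have hHσ : 0 < H σ := pos_of_hasDerivAt_ge_mul (K := D) hσ.1 (fun t _ => hH t)
    (fun t ht => by
      have := hnonneg ht
      nlinarith [mul_le_mul_of_nonneg_right (hD ⟨t, hsub ht, rfl⟩) this.2,
        mul_nonneg (hc t (hsub ht)) this.1]) hHs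
  rcases hσbad with h | h <;> linarith

end LinearPlanar

section Cooperative

variable {y g h a b c d : ℝ → ℝ} {P : ℝ}

theorem false_of_periodic_of_cooperative (hP : 0 < P) (hper : Function.Periodic y P)
    (hy : ∀ t, HasDerivAt y (g t) t)
    (hg : ∀ t, HasDerivAt g (a t * g t + b t * h t) t)
    (hh : ∀ t, HasDerivAt h (c t * g t + d t * h t) t)
    (ha : Continuous a) (hd : Continuous d) (hb_pos : ∀ t, 0 < b t) (hc_nonneg : ∀ t, 0 ≤ c t)
    {τ : ℝ} (hgτ : g τ = 0) (hhτ : 0 < h τ) : False := by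
  have hg_pos : ∀ᶠ t in 𝓝[>] τ, 0 < g t :=
    (hg τ).eventually_pos_nhdsGT hgτ (by simpa [hgτ] using mul_pos (hb_pos τ) hhτ)
  have hh_pos : ∀ᶠ t in 𝓝[>] τ, 0 < h t :=
    ((hh τ).continuousAt.eventually (eventually_gt_nhds hhτ)).filter_mono nhdsWithin_le_nhds
  obtain ⟨s, hgs, hhs⟩ := (hg_pos.and hh_pos).exists
  have hpos := cooperative_pos_on_Icc (T := s + P) hg hh ha.continuousOn hd.continuousOn
    (fun t _ => (hb_pos t).le) (fun t _ => hc_nonneg t) hgs hhs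
  have hmono : StrictMonoOn y (Icc s (s + P)) :=
    strictMonoOn_of_hasDerivWithinAt_pos (convex_Icc _ _)
      (HasDerivAt.continuousOn fun t _ => hy t) (fun t _ => (hy t).hasDerivWithinAt)
      (fun t ht => (hpos t (interior_subset ht)).1)
  have := hmono (left_mem_Icc.2 (by linarith)) (right_mem_Icc.2 (by linarith)) (by linarith)
  exact (hper s ▸ this).false

theorem eq_of_periodic_of_cooperative (hP : 0 < P) (hper : Function.Periodic y P)
    (hy : ∀ t, HasDerivAt y (g t) t)
    (hg : ∀ t, HasDerivAt g (a t * g t + b t * h t) t)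
    (hh : ∀ t, HasDerivAt h (c t * g t + d t * h t) t)
    (ha : Continuous a) (hb : Continuous b) (hc : Continuous c) (hd : Continuous d)
    (hb_pos : ∀ t, 0 < b t) (hc_nonneg : ∀ t, 0 ≤ c t) (t₁ t₂ : ℝ) : y t₁ = y t₂ := by
  have cy : Continuous y := continuous_iff_continuousAt.2 fun t => (hy t).continuousAt
  obtain ⟨τ, -, hgτ⟩ := exists_hasDerivAt_eq_zero hP cy.continuousOn
    (by simpa using (hper 0).symm) fun t _ => hy t
  rcases lt_trichotomy (h τ) 0 with hhτ | hhτ | hhτ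
  · refine (false_of_periodic_of_cooperative (y := fun t => -y t) (g := fun t => -g t)
      (h := fun t => -h t) hP (fun t => by simp only [hper t]) (fun t => (hy t).neg)
      (fun t => (hg t).neg.congr_deriv (by ring)) (fun t => (hh t).neg.congr_deriv (by ring))
      ha hd hb_pos hc_nonneg (by simp [hgτ]) (neg_pos.2 hhτ)).elim
  · have hg_zero := linear_planar_eq_zero_on_Icc (T := τ + P) hg hh ha.continuousOn
      hb.continuousOn hc.continuousOn hd.continuousOn hgτ hhτ
    have hconst := constant_of_has_deriv_right_zero cy.continuousOn fun t ht =>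
      (hg_zero t (Ico_subset_Icc_self ht)).1 ▸ (hy t).hasDerivWithinAt
    obtain ⟨r₁, hr₁, e₁⟩ := hper.exists_mem_Ico hP t₁ τ
    obtain ⟨r₂, hr₂, e₂⟩ := hper.exists_mem_Ico hP t₂ τ
    rw [e₁, e₂, hconst r₁ (Ico_subset_Icc_self hr₁), hconst r₂ (Ico_subset_Icc_self hr₂)]
  · exact (false_of_periodic_of_cooperative hP hper hy hg hh ha hd hb_pos hc_nonneg
      hgτ hhτ).elim

end Cooperative

theorem abs_rpow_mul_of_neg {x : ℝ} (hx : x < 0) (r : ℝ) : |x| ^ r * x = -(-x) ^ (r + 1) := by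
  rw [abs_of_neg hx, Real.rpow_add_one (neg_pos.2 hx).ne']
  ring

theorem eq_of_periodic_of_hasDerivAt_rpow {y v : ℝ → ℝ} {γ δ α q P : ℝ} (hα : α ≤ 0)
    (hq : 0 < q) (hP : 0 < P) (hper : Function.Periodic y P) (hv : ∀ t, 0 < v t)
    (hy : ∀ t, HasDerivAt y (-γ * y t + v t ^ q) t)
    (hv' : ∀ t, HasDerivAt v (-δ * v t - α * y t - v t ^ q) t) (t₁ t₂ : ℝ) :
    y t₁ = y t₂ := by
  set b : ℝ → ℝ := fun t => q * v t ^ (q - 1)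
  have hb : Continuous b := continuous_const.mul <|
    (continuous_iff_continuousAt.2 fun t => (hv' t).continuousAt).rpow_const
      fun t => Or.inl (hv t).ne'
  have hvq : ∀ t, HasDerivAt (fun t => v t ^ q) (b t * (-δ * v t - α * y t - v t ^ q)) t :=
    fun t => ((hv' t).rpow_const (Or.inl (hv t).ne')).congr_deriv (by ring)
  exact eq_of_periodic_of_cooperative (g := fun t => -γ * y t + v t ^ q)
    (h := fun t => -δ * v t - α * y t - v t ^ q) (a := fun _ => -γ) (c := fun _ => -α)
    (d := fun t => -δ - b t) hP hper hy
    (fun t => (((hy t).const_mul (-γ)).add (hvq t)).congr_deriv (by ring))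
    (fun t => ((((hv' t).const_mul (-δ)).sub ((hy t).const_mul α)).sub (hvq t)).congr_deriv
      (by ring))
    continuous_const hb continuous_const (continuous_const.sub hb)
    (fun t => mul_pos hq (Real.rpow_pos_of_pos (hv t) _)) (fun _ => neg_nonneg.2 hα) t₁ t₂

theorem neg_add_div_lt_zero {p N γ : ℝ} (hp : 2 ≤ p) (hN : 0 ≤ N) (hγ : 0 < γ) :
    -γ + γ * (N + γ) / ((p - 1) * (N + 2 * γ)) < 0 := by
  have hden : N + 2 * γ ≤ (p - 1) * (N + 2 * γ) := by nlinarith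
  have : γ * (N + γ) / ((p - 1) * (N + 2 * γ)) < γ := by
    rw [div_lt_iff₀ (by linarith)]
    nlinarith
  linarith

theorem stmt18_general (p N α γ : ℝ) (hp : 2 < p) (hN : 1 ≤ N)
    (hγ : γ = p / (p - 2))
    (hα : α ≤ -γ + γ * (N + γ) / ((p - 1) * (N + 2 * γ)))
    (y Y : ℝ → ℝ) (P : ℝ) (hP : 0 < P)
    (hper : ∀ τ : ℝ, y (τ + P) = y τ ∧ Y (τ + P) = Y τ)
    (hQ4 : ∀ τ : ℝ, 0 < y τ ∧ Y τ < 0)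
    (hnc : ∃ τ₁ τ₂ : ℝ, y τ₁ ≠ y τ₂)
    (hy : ∀ τ : ℝ, HasDerivAt y (-γ * y τ - |Y τ| ^ ((2 - p) / (p - 1)) * Y τ) τ)
    (hY : ∀ τ : ℝ, HasDerivAt Y
      (-(γ + N) * Y τ + (α * y τ - |Y τ| ^ ((2 - p) / (p - 1)) * Y τ)) τ) :
    False := by
  have hγ_pos : 0 < γ := hγ ▸ div_pos (by linarith) (by linarith)
  have hα_neg : α ≤ 0 := (hα.trans_lt (neg_add_div_lt_zero hp.le (by linarith) hγ_pos)).le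
  have hpow : ∀ τ, |Y τ| ^ ((2 - p) / (p - 1)) * Y τ = -(-Y τ) ^ (1 / (p - 1)) := fun τ => by
    rw [abs_rpow_mul_of_neg (hQ4 τ).2, div_add_one (by linarith : p - 1 ≠ 0)]
    ring_nf
  obtain ⟨τ₁, τ₂, hne⟩ := hnc
  exact hne <| eq_of_periodic_of_hasDerivAt_rpow (v := fun τ => -Y τ) (δ := γ + N)
    (q := 1 / (p - 1)) hα_neg (one_div_pos.2 (by linarith)) hP (fun τ => (hper τ).1)
    (fun τ => neg_pos.2 (hQ4 τ).2)
    (fun τ => (hy τ).congr_deriv (by rw [hpow]; ring))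
    (fun τ => (hY τ).neg.congr_deriv (by rw [hpow]; ring)) τ₁ τ₂

/-- For ε=1 and α ≤ α* = -γ + γ(N+γ)/((p-1)(N+2γ)), system (S) admits no
nonconstant periodic orbit in the quadrant {y>0, Y<0} with nonpositive mean
Floquet integral: assuming such a cycle exists leads to a contradiction. -/
theorem stmt18 (p N α γ : ℝ) (hp : 2 < p) (hN : 1 ≤ N)
    (hγ : γ = p / (p - 2))
    (hα : α ≤ -γ + γ * (N + γ) / ((p - 1) * (N + 2 * γ)))
    (y Y : ℝ → ℝ) (P : ℝ) (hP : 0 < P)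
    (hper : ∀ τ : ℝ, y (τ + P) = y τ ∧ Y (τ + P) = Y τ)
    (hQ4 : ∀ τ : ℝ, 0 < y τ ∧ Y τ < 0)
    (hnc : ∃ τ₁ τ₂ : ℝ, y τ₁ ≠ y τ₂)
    (hy : ∀ τ : ℝ, HasDerivAt y (-γ * y τ - |Y τ| ^ ((2 - p) / (p - 1)) * Y τ) τ)
    (hY : ∀ τ : ℝ, HasDerivAt Y
      (-(γ + N) * Y τ + (α * y τ - |Y τ| ^ ((2 - p) / (p - 1)) * Y τ)) τ)
    (hFloquet : (1 / P) *
      (∫ τ in (0:ℝ)..P, (|Y τ| ^ ((2 - p) / (p - 1)) / (p - 1) - 2 * γ - N)) ≤ 0) :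
    False :=
  stmt18_general p N α γ hp hN hγ hα y Y P hP hper hQ4 hnc hy hY
end

section
/- Let p>2, N≥1, ε=±1, α≠0, and let w be a solution of equation (E_w) on (0,r₀) with w(0⁺)=a≠0 and w'(0⁺)=0 (regular solution), where w and |w'|^{p-2}w' are C^1 up to 0. Then lim_{r→0} |w'(r)|^{p-2}w'(r)/(r w(r)) = -εα/N. -/
/-!
Write `v = |w'|^{p-2} w'`. The equation says exactly that `(r^{N-1} v)' = -ε r^{N-1} (r w' + α w)`,
and both `r^{N-1} v` and `r^N` vanish at `0⁺`. By L'Hôpital's rule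
`v / r = r^{N-1} v / r^N` has the same limit as `-ε (r w' + α w) / N`, namely `-ε α a / N`;
dividing by `w → a` gives the claim.
-/

open Filter Topology Set

lemma tendsto_abs_rpow_mul_self_zero {ι : Type*} {l : Filter ι} {u : ι → ℝ} {q : ℝ}
    (hq : 0 < q) (hu : Tendsto u l (𝓝 0)) :
    Tendsto (fun i => |u i| ^ q * u i) l (𝓝 0) := by
  have hc : Continuous (fun x : ℝ => |x| ^ q * x) :=
    ((continuous_abs.rpow_const fun _ => Or.inr hq.le)).mul continuous_id
  simpa [Function.comp_def, Real.zero_rpow hq.ne'] using (hc.tendsto 0).comp hu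

lemma hasDerivAt_rpow_mul_of_deriv_add {N r h : ℝ} {v : ℝ → ℝ} (hr : 0 < r)
    (hv : DifferentiableAt ℝ v r) (hvh : deriv v r + (N - 1) / r * v r = h) :
    HasDerivAt (fun s => s ^ (N - 1) * v s) (r ^ (N - 1) * h) r := by
  have hpow : HasDerivAt (fun s : ℝ => s ^ (N - 1)) ((N - 1) * r ^ (N - 1 - 1)) r :=
    Real.hasDerivAt_rpow_const (Or.inl hr.ne')
  refine (hpow.mul hv.hasDerivAt).congr_deriv ?_
  rw [← hvh, Real.rpow_sub_one hr.ne']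
  field_simp
  ring

lemma tendsto_rpow_sub_one_mul_zero {N : ℝ} (hN : 1 ≤ N) {v : ℝ → ℝ}
    (hv : Tendsto v (𝓝[>] 0) (𝓝 0)) :
    Tendsto (fun r => r ^ (N - 1) * v r) (𝓝[>] 0) (𝓝 0) := by
  refine squeeze_zero_norm' ?_ (by simpa using hv.norm)
  filter_upwards [Ioo_mem_nhdsGT (zero_lt_one' ℝ)] with r hr
  rw [norm_mul, Real.norm_of_nonneg (Real.rpow_nonneg hr.1.le _)]
  exact mul_le_of_le_one_left (norm_nonneg _) (Real.rpow_le_one hr.1.le hr.2.le (by linarith))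

lemma tendsto_div_self_of_hasDerivAt_rpow_mul {N L r₀ : ℝ} (hN : 1 ≤ N) (hr₀ : 0 < r₀)
    {v h : ℝ → ℝ} (hv : Tendsto v (𝓝[>] 0) (𝓝 0))
    (hderiv : ∀ r ∈ Ioo 0 r₀, HasDerivAt (fun s => s ^ (N - 1) * v s) (r ^ (N - 1) * h r) r)
    (hh : Tendsto h (𝓝[>] 0) (𝓝 L)) :
    Tendsto (fun r => v r / r) (𝓝[>] 0) (𝓝 (L / N)) := by
  have hN0 : 0 < N := by linarith
  have hpowN : Tendsto (fun r : ℝ => r ^ N) (𝓝[>] 0) (𝓝 0) := by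
    simpa [Real.zero_rpow hN0.ne'] using
      (Real.continuousAt_rpow_const 0 N (Or.inr hN0.le)).tendsto.mono_left nhdsWithin_le_nhds
  have hquot : Tendsto (fun r => r ^ (N - 1) * h r / (N * r ^ (N - 1))) (𝓝[>] 0)
      (𝓝 (L / N)) := by
    refine (hh.div_const N).congr' ?_
    filter_upwards [self_mem_nhdsWithin] with r (hr : 0 < r)
    have := (Real.rpow_pos_of_pos hr (N - 1)).ne'
    field_simp
  have hlhopital := HasDerivAt.lhopital_zero_right_on_Ioo hr₀ hderiv
    (fun r hr => Real.hasDerivAt_rpow_const (Or.inl hr.1.ne'))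
    (fun r hr => mul_ne_zero hN0.ne' (Real.rpow_pos_of_pos hr.1 _).ne')
    (tendsto_rpow_sub_one_mul_zero hN hv) hpowN hquot
  refine hlhopital.congr' ?_
  filter_upwards [self_mem_nhdsWithin] with r (hr : 0 < r)
  rw [Real.rpow_sub_one hr.ne']
  field_simp [(Real.rpow_pos_of_pos hr N).ne']

theorem stmt19_general (p N ε α a r₀ : ℝ) (hp : 2 < p) (hN : 1 ≤ N)
    (hr₀ : 0 < r₀)
    (w : ℝ → ℝ) (ha : a ≠ 0)
    (hcont : ContinuousOn w (Set.Ico 0 r₀)) (hw0 : w 0 = a)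
    (hd0 : Filter.Tendsto (deriv w) (nhdsWithin 0 (Set.Ioi 0)) (nhds 0))
    (hw2 : ∀ r ∈ Set.Ioo 0 r₀,
      DifferentiableAt ℝ (fun s => |deriv w s| ^ (p - 2) * deriv w s) r)
    (heq : ∀ r ∈ Set.Ioo 0 r₀, Ew p N ε α w r) :
    Filter.Tendsto (fun r => (|deriv w r| ^ (p - 2) * deriv w r) / (r * w r))
      (nhdsWithin 0 (Set.Ioi 0)) (nhds (-(ε * α) / N)) := by
  have hwa : Tendsto w (𝓝[>] 0) (𝓝 a) :=
    hw0 ▸ ((hcont 0 ⟨le_rfl, hr₀⟩).mono Ioo_subset_Ico_self).tendsto.mono_left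
      (nhdsWithin_Ioo_eq_nhdsGT hr₀).ge
  have hsource : Tendsto (fun r => -ε * (r * deriv w r + α * w r)) (𝓝[>] 0)
      (𝓝 (-ε * (α * a))) := by
    simpa using ((tendsto_nhdsWithin_of_tendsto_nhds tendsto_id).mul hd0
      |>.add (hwa.const_mul α)).const_mul (-ε)
  have hvr := tendsto_div_self_of_hasDerivAt_rpow_mul hN hr₀
    (tendsto_abs_rpow_mul_self_zero (by linarith) hd0)
    (fun r hr => hasDerivAt_rpow_mul_of_deriv_add hr.1 (hw2 r hr)
      (by have := heq r hr; rw [Ew] at this; linarith))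
    hsource
  convert hvr.div hwa ha using 2 with r
  · rw [Pi.div_apply, div_div]
  · field_simp

/-- For a regular solution of (E_w) with w(0⁺)=a≠0, w'(0⁺)=0, one has
lim_{r→0⁺} |w'|^{p-2}w'/(r w) = -εα/N. -/
theorem stmt19 (p N ε α a r₀ : ℝ) (hp : 2 < p) (hN : 1 ≤ N)
    (hε : ε = 1 ∨ ε = -1) (hα0 : α ≠ 0) (hr₀ : 0 < r₀)
    (w : ℝ → ℝ) (ha : a ≠ 0)
    (hcont : ContinuousOn w (Set.Ico 0 r₀)) (hw0 : w 0 = a)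
    (hd0 : Filter.Tendsto (deriv w) (nhdsWithin 0 (Set.Ioi 0)) (nhds 0))
    (hw1 : ∀ r ∈ Set.Ioo 0 r₀, DifferentiableAt ℝ w r)
    (hw2 : ∀ r ∈ Set.Ioo 0 r₀,
      DifferentiableAt ℝ (fun s => |deriv w s| ^ (p - 2) * deriv w s) r)
    (heq : ∀ r ∈ Set.Ioo 0 r₀, Ew p N ε α w r) :
    Filter.Tendsto (fun r => (|deriv w r| ^ (p - 2) * deriv w r) / (r * w r))
      (nhdsWithin 0 (Set.Ioi 0)) (nhds (-(ε * α) / N)) :=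
  stmt19_general p N ε α a r₀ hp hN hr₀ w ha hcont hw0 hd0 hw2 heq
end
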